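/- Let T > 0 and let e : ℝ → ℝ be continuous and nonnegative on [0,T] and twice differentiable on (0,T), satisfying e'(t) ≤ 0 and e(t)·e''(t) ≥ (e'(t))² for every t ∈ (0,T). If e(T) = 0, then e(t) = 0 for every t ∈ [0,T]; moreover e is nonincreasing on [0,T], i.e. e(t₂) ≤ e(t₁) whenever 0 ≤ t₁ < t₂ ≤ T. -/

import Mathlib

/-!
On an interval where `e > 0`, the hypothesis `(e')² ≤ e e''` says exactly that `log e` is convex.
A convex function on `(a, b)` is bounded below near `b`, so `e` stays above a positive constant
there and, by continuity, cannot vanish at `b`. So if `e T = 0` while `e` is positive somewhere,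
then `e 0 > 0` since `e' ≤ 0`, and applying this on `(0, c)`, where `c ∈ (0, T]` is the first
zero of `e`, is absurd.
-/

open Set Filter Topology

theorem convexOn_log_comp_of_sq_deriv_le_mul_deriv2 {D : Set ℝ} (hD : Convex ℝ D)
    {e e' e'' : ℝ → ℝ} (hpos : ∀ t ∈ D, 0 < e t) (he : ∀ t ∈ D, HasDerivAt e (e' t) t)
    (he' : ∀ t ∈ D, HasDerivAt e' (e'' t) t) (hineq : ∀ t ∈ D, e' t ^ 2 ≤ e t * e'' t) :
    ConvexOn ℝ D (fun t => Real.log (e t)) := by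
  have hD_int : interior D ⊆ D := interior_subset
  refine convexOn_of_hasDerivWithinAt2_nonneg hD
    (fun t ht => ((he t ht).log (hpos t ht).ne').continuousAt.continuousWithinAt)
    (fun t ht => ((he t (hD_int ht)).log (hpos t (hD_int ht)).ne').hasDerivWithinAt)
    (fun t ht => ((he' t (hD_int ht)).div (he t (hD_int ht))
      (hpos t (hD_int ht)).ne').hasDerivWithinAt) fun t ht => ?_
  have hineq_t := hineq t (hD_int ht)
  exact div_nonneg (by nlinarith) (sq_nonneg _)

theorem ConvexOn.exists_eventually_le_nhdsLT {f : ℝ → ℝ} {a b : ℝ} (hab : a < b)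
    (hf : ConvexOn ℝ (Ioo a b) f) : ∃ L, ∀ᶠ s in 𝓝[<] b, L ≤ f s := by
  obtain ⟨c, hac, hcb⟩ := exists_between hab
  obtain ⟨d, hcd, hdb⟩ := exists_between hcb
  set k := (f d - f c) / (d - c)
  refine ⟨f d - |k| * (b - d), mem_of_superset (Ioo_mem_nhdsLT hdb) fun s hs => ?_⟩
  have hslope : k ≤ (f s - f d) / (s - d) :=
    hf.slope_mono_adjacent ⟨hac, hcb⟩ ⟨hac.trans (hcd.trans hs.1), hs.2⟩ hcd hs.1
  rw [le_div_iff₀ (sub_pos.2 hs.1)] at hslope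
  have hlin : -|k| * (b - d) ≤ k * (s - d) := calc
    -|k| * (b - d) ≤ -|k| * (s - d) :=
      mul_le_mul_of_nonpos_left (by linarith [hs.2]) (neg_nonpos.2 (abs_nonneg k))
    _ ≤ k * (s - d) := mul_le_mul_of_nonneg_right (neg_abs_le k) (sub_pos.2 hs.1).le
  show f d - |k| * (b - d) ≤ f s
  linarith

theorem pos_of_convexOn_log_comp {e : ℝ → ℝ} {a b : ℝ} (hab : a < b)
    (hcont : ContinuousWithinAt e (Ioo a b) b) (hpos : ∀ t ∈ Ioo a b, 0 < e t)
    (hconv : ConvexOn ℝ (Ioo a b) (fun t => Real.log (e t))) : 0 < e b := by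
  obtain ⟨L, hL⟩ := hconv.exists_eventually_le_nhdsLT hab
  rw [ContinuousWithinAt, nhdsWithin_Ioo_eq_nhdsLT hab] at hcont
  have hbound : ∀ᶠ s in 𝓝[<] b, Real.exp L ≤ e s := by
    filter_upwards [hL, Ioo_mem_nhdsLT hab] with s hLs hs
    rw [← Real.exp_log (hpos s hs)]
    exact Real.exp_le_exp.2 hLs
  exact (Real.exp_pos L).trans_le (ge_of_tendsto hcont hbound)

theorem ContinuousOn.exists_first_zero {f : ℝ → ℝ} {a b : ℝ} (hf : ContinuousOn f (Icc a b))
    (hab : a ≤ b) (hfa : f a ≠ 0) (hfb : f b = 0) :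
    ∃ c ∈ Ioc a b, f c = 0 ∧ ∀ s ∈ Ico a c, f s ≠ 0 := by
  set Z := Icc a b ∩ f ⁻¹' {0}
  have hZ_bdd : BddBelow Z := ⟨a, fun s hs => hs.1.1⟩
  have hZ_closed : IsClosed Z :=
    hf.preimage_isClosed_of_isClosed isClosed_Icc isClosed_singleton
  have hc : sInf Z ∈ Z := hZ_closed.csInf_mem ⟨b, ⟨hab, le_rfl⟩, hfb⟩ hZ_bdd
  exact ⟨sInf Z, ⟨hc.1.1.lt_of_ne fun h => hfa (h ▸ hc.2), hc.1.2⟩, hc.2, fun s hs hfs =>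
    hs.2.not_ge (csInf_le hZ_bdd ⟨⟨hs.1, hs.2.le.trans hc.1.2⟩, hfs⟩)⟩

theorem stmt_1_general (T : ℝ) (e e' e'' : ℝ → ℝ)
    (hcont : ContinuousOn e (Set.Icc 0 T))
    (hnonneg : ∀ t ∈ Set.Icc 0 T, 0 ≤ e t)
    (hd1 : ∀ t ∈ Set.Ioo 0 T, HasDerivAt e (e' t) t)
    (hd2 : ∀ t ∈ Set.Ioo 0 T, HasDerivAt e' (e'' t) t)
    (hdec : ∀ t ∈ Set.Ioo 0 T, e' t ≤ 0)
    (hineq : ∀ t ∈ Set.Ioo 0 T, (e' t) ^ 2 ≤ e t * e'' t) :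
    (e T = 0 → ∀ t ∈ Set.Icc 0 T, e t = 0) ∧
      (∀ t₁ t₂ : ℝ, 0 ≤ t₁ → t₁ < t₂ → t₂ ≤ T → e t₂ ≤ e t₁) := by
  have hanti : AntitoneOn e (Icc 0 T) :=
    antitoneOn_of_hasDerivWithinAt_nonpos (convex_Icc 0 T) hcont
      (by simpa only [interior_Icc] using fun t ht => (hd1 t ht).hasDerivWithinAt)
      (by simpa only [interior_Icc] using hdec)
  refine ⟨fun heT t ht => ?_, fun t₁ t₂ h0 h12 h2T =>
    hanti ⟨h0, h12.le.trans h2T⟩ ⟨h0.trans h12.le, h2T⟩ h12.le⟩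
  by_contra hne
  have h0T : (0 : ℝ) ∈ Icc 0 T := ⟨le_rfl, ht.1.trans ht.2⟩
  have he0 : 0 < e 0 := ((hnonneg t ht).lt_of_ne' hne).trans_le (hanti h0T ht ht.1)
  obtain ⟨c, hc, hec, hne_c⟩ := hcont.exists_first_zero h0T.2 he0.ne' heT
  have hsub : Ioo 0 c ⊆ Ioo 0 T := Ioo_subset_Ioo_right hc.2
  have hpos : ∀ s ∈ Ioo 0 c, 0 < e s := fun s hs =>
    (hnonneg s (Ioo_subset_Icc_self (hsub hs))).lt_of_ne' (hne_c s (Ioo_subset_Ico_self hs))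
  have hconv := convexOn_log_comp_of_sq_deriv_le_mul_deriv2 (convex_Ioo 0 c) hpos
    (fun s hs => hd1 s (hsub hs)) (fun s hs => hd2 s (hsub hs)) (fun s hs => hineq s (hsub hs))
  have hcont_c : ContinuousWithinAt e (Ioo 0 c) c :=
    (hcont c ⟨hc.1.le, hc.2⟩).mono (hsub.trans Ioo_subset_Icc_self)
  exact (pos_of_convexOn_log_comp hc.1 hcont_c hpos hconv).ne' hec

/-- Abstract form of Lemma 3.1: a continuous nonnegative energy on `[0,T]`,
twice differentiable on `(0,T)` with `e' ≤ 0` and `e·e'' ≥ (e')²`, is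
nonincreasing, and vanishes identically on `[0,T]` whenever `e(T) = 0`. -/
theorem stmt_1 (T : ℝ) (hT : 0 < T) (e e' e'' : ℝ → ℝ)
    (hcont : ContinuousOn e (Set.Icc 0 T))
    (hnonneg : ∀ t ∈ Set.Icc 0 T, 0 ≤ e t)
    (hd1 : ∀ t ∈ Set.Ioo 0 T, HasDerivAt e (e' t) t)
    (hd2 : ∀ t ∈ Set.Ioo 0 T, HasDerivAt e' (e'' t) t)
    (hdec : ∀ t ∈ Set.Ioo 0 T, e' t ≤ 0)
    (hineq : ∀ t ∈ Set.Ioo 0 T, (e' t) ^ 2 ≤ e t * e'' t) :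
    (e T = 0 → ∀ t ∈ Set.Icc 0 T, e t = 0) ∧
      (∀ t₁ t₂ : ℝ, 0 ≤ t₁ → t₁ < t₂ → t₂ ≤ T → e t₂ ≤ e t₁) :=
  stmt_1_general T e e' e'' hcont hnonneg hd1 hd2 hdec hineq
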